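/- arXiv:2603.25940 — 5 statements merged into one kernel-verified Lean document; each statement's English description precedes it below -/
import Mathlib

section
/- Let w : ℝ → ℝ be four times continuously differentiable on [0,1] with ∫₀¹ w(x)² dx > 0, satisfying w(0) = w(1) = 0 and either (w'(0) = w'(1) = 0) or (w''(0) = w''(1) = 0). Define κ(w) = (∫₀¹ w(x)·w''(x) dx) / (∫₀¹ w(x)² dx). If w satisfies the necessary condition w⁗(x) − 2·κ(w)·w''(x) + κ(w)²·w(x) = 0 for all x ∈ [0,1], then equality holds in the Cauchy–Schwarz inequality: (∫₀¹ w(x)·w''(x) dx)² = (∫₀¹ w(x)² dx) · (∫₀¹ (w''(x))² dx). -/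
/-- `D n w` is the `n`-th derivative of `w` on the interval `[0,1]`. -/
noncomputable def D (n : ℕ) (w : ℝ → ℝ) : ℝ → ℝ :=
  iteratedDerivWithin n w (Set.Icc (0 : ℝ) 1)

/-- The Rayleigh-type quotient `κ(w) = (∫₀¹ w w'') / (∫₀¹ w²)`. -/
noncomputable def kappa (w : ℝ → ℝ) : ℝ :=
  (∫ x in (0:ℝ)..1, w x * D 2 w x) / (∫ x in (0:ℝ)..1, (w x) ^ 2)

/-!
Two integrations by parts, whose boundary terms vanish under either set of boundary conditions,
give `∫ w w⁗ = ∫ (w'')²`. Integrating the necessary condition against `w` then yields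
`∫ (w'')² - 2κ ∫ w w'' + κ² ∫ w² = 0`, and since `∫ w w'' = κ ∫ w²` this says
`∫ (w'')² = κ² ∫ w²`, i.e. `(∫ w w'')² = κ² (∫ w²)² = (∫ w²)(∫ (w'')²)`.
-/

open Set intervalIntegral

theorem ContDiffOn.hasDerivWithinAt_iteratedDerivWithin {𝕜 F : Type*}
    [NontriviallyNormedField 𝕜] [NormedAddCommGroup F] [NormedSpace 𝕜 F] {f : 𝕜 → F} {s : Set 𝕜}
    {n : WithTop ℕ∞} {k : ℕ} {x : 𝕜} (hs : UniqueDiffOn 𝕜 s) (hf : ContDiffOn 𝕜 n f s)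
    (hk : k < n) (hx : x ∈ s) :
    HasDerivWithinAt (iteratedDerivWithin k f s) (iteratedDerivWithin (k + 1) f s x) s x := by
  rw [iteratedDerivWithin_succ]
  exact (hf.differentiableOn_iteratedDerivWithin hk hs x hx).hasDerivWithinAt

section IteratedDerivIcc

variable {a b : ℝ} {f : ℝ → ℝ} {n : WithTop ℕ∞}

local notation f "⁽" k "⁾" => iteratedDerivWithin k f (Icc a b)

theorem ContDiffOn.integral_iteratedDerivWithin_mul_succ (hab : a < b)
    (hf : ContDiffOn ℝ n f (Icc a b)) {i j : ℕ} (hi : i < n) (hj : j < n) :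
    ∫ x in a..b, (f⁽i⁾) x * (f⁽j + 1⁾) x
      = (f⁽i⁾) b * (f⁽j⁾) b - (f⁽i⁾) a * (f⁽j⁾) a - ∫ x in a..b, (f⁽i + 1⁾) x * (f⁽j⁾) x := by
  have hIcc : uIcc a b = Icc a b := uIcc_of_le hab.le
  have hderiv (k : ℕ) (hk : k < n) (x : ℝ) (hx : x ∈ uIcc a b) :
      HasDerivWithinAt (f⁽k⁾) ((f⁽k + 1⁾) x) (uIcc a b) x := by
    rw [hIcc] at hx ⊢
    exact hf.hasDerivWithinAt_iteratedDerivWithin (uniqueDiffOn_Icc hab) hk hx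
  have hintegrable (k : ℕ) (hk : k < n) :
      IntervalIntegrable (f⁽k + 1⁾) MeasureTheory.volume a b :=
    (hf.continuousOn_iteratedDerivWithin (ENat.add_one_natCast_le_withTop_of_lt hk)
      (uniqueDiffOn_Icc hab)).intervalIntegrable_of_Icc hab.le
  exact integral_mul_deriv_eq_deriv_mul_of_hasDerivWithinAt (hderiv i hi) (hderiv j hj)
    (hintegrable i hi) (hintegrable j hj)

theorem ContDiffOn.integral_mul_iteratedDerivWithin_four (hab : a < b)
    (hf : ContDiffOn ℝ 4 f (Icc a b)) :
    ∫ x in a..b, f x * (f⁽4⁾) x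
      = f b * (f⁽3⁾) b - f a * (f⁽3⁾) a - ((f⁽1⁾) b * (f⁽2⁾) b - (f⁽1⁾) a * (f⁽2⁾) a)
        + ∫ x in a..b, (f⁽2⁾) x ^ 2 := by
  have h03 := hf.integral_iteratedDerivWithin_mul_succ hab (i := 0) (j := 3)
    (by norm_num) (by norm_num)
  have h12 := hf.integral_iteratedDerivWithin_mul_succ hab (i := 1) (j := 2)
    (by norm_num) (by norm_num)
  simp only [iteratedDerivWithin_zero, zero_add, Nat.reduceAdd] at h03 h12
  simp only [pow_two]
  linarith

theorem ContDiffOn.integral_mul_iteratedDerivWithin_ode_eq_zero (hab : a < b)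
    (hf : ContDiffOn ℝ 4 f (Icc a b)) {c : ℝ}
    (hode : ∀ x ∈ Icc a b, (f⁽4⁾) x - 2 * c * (f⁽2⁾) x + c ^ 2 * f x = 0) :
    (∫ x in a..b, f x * (f⁽4⁾) x) - 2 * c * (∫ x in a..b, f x * (f⁽2⁾) x)
      + c ^ 2 * ∫ x in a..b, f x ^ 2 = 0 := by
  have hint {g : ℝ → ℝ} (hg : ContinuousOn g (Icc a b)) :
      IntervalIntegrable (fun x ↦ f x * g x) MeasureTheory.volume a b :=
    (hf.continuousOn.mul hg).intervalIntegrable_of_Icc hab.le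
  have hf4 := hint (hf.continuousOn_iteratedDerivWithin le_rfl (uniqueDiffOn_Icc hab))
  have hf2 := hint
    (hf.continuousOn_iteratedDerivWithin (m := 2) (by norm_num) (uniqueDiffOn_Icc hab))
  have hf0 : IntervalIntegrable (fun x ↦ f x ^ 2) MeasureTheory.volume a b := by
    simpa only [pow_two] using hint hf.continuousOn
  calc _ = ∫ x in a..b, f x * (f⁽4⁾) x - 2 * c * (f x * (f⁽2⁾) x) + c ^ 2 * f x ^ 2 := by
        rw [integral_add (hf4.sub (hf2.const_mul _)) (hf0.const_mul _),
          integral_sub hf4 (hf2.const_mul _), integral_const_mul, integral_const_mul]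
    _ = ∫ _ in a..b, (0 : ℝ) := integral_congr fun x hx ↦ by
        rw [uIcc_of_le hab.le] at hx
        linear_combination f x * hode x hx
    _ = 0 := integral_zero

end IteratedDerivIcc

/-- Under clamped (`w = w' = 0` at both ends) or simply supported (`w = w'' = 0` at both
ends) boundary conditions, the necessary condition
`w⁗ − 2 κ(w) w'' + κ(w)² w = 0` on `[0,1]` implies equality in the Cauchy–Schwarz
inequality `(∫ w w'')² = (∫ w²)(∫ (w'')²)`. -/
theorem necessary_condition_implies_cauchy_schwarz_equality
    (w : ℝ → ℝ) (hw : ContDiffOn ℝ 4 w (Set.Icc (0 : ℝ) 1))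
    (hpos : 0 < ∫ x in (0:ℝ)..1, (w x) ^ 2)
    (h0 : w 0 = 0) (h1 : w 1 = 0)
    (hbc : (D 1 w 0 = 0 ∧ D 1 w 1 = 0) ∨ (D 2 w 0 = 0 ∧ D 2 w 1 = 0))
    (hnc : ∀ x ∈ Set.Icc (0 : ℝ) 1,
      D 4 w x - 2 * kappa w * D 2 w x + (kappa w) ^ 2 * w x = 0) :
    (∫ x in (0:ℝ)..1, w x * D 2 w x) ^ 2
      = (∫ x in (0:ℝ)..1, (w x) ^ 2) * ∫ x in (0:ℝ)..1, (D 2 w x) ^ 2 := by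
  have hparts : ∫ x in (0:ℝ)..1, w x * D 4 w x
      = w 1 * D 3 w 1 - w 0 * D 3 w 0 - (D 1 w 1 * D 2 w 1 - D 1 w 0 * D 2 w 0)
        + ∫ x in (0:ℝ)..1, (D 2 w x) ^ 2 :=
    hw.integral_mul_iteratedDerivWithin_four zero_lt_one
  have hboundary : D 1 w 1 * D 2 w 1 - D 1 w 0 * D 2 w 0 = 0 := by
    rcases hbc with ⟨h₀, h₁⟩ | ⟨h₀, h₁⟩ <;> simp [h₀, h₁]
  rw [h0, h1, hboundary] at hparts
  have hmoment : (∫ x in (0:ℝ)..1, w x * D 4 w x)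
      - 2 * kappa w * (∫ x in (0:ℝ)..1, w x * D 2 w x)
      + kappa w ^ 2 * ∫ x in (0:ℝ)..1, (w x) ^ 2 = 0 :=
    hw.integral_mul_iteratedDerivWithin_ode_eq_zero zero_lt_one hnc
  have hκ : ∫ x in (0:ℝ)..1, w x * D 2 w x = kappa w * ∫ x in (0:ℝ)..1, (w x) ^ 2 :=
    (div_mul_cancel₀ _ hpos.ne').symm
  rw [hκ] at hmoment ⊢
  linear_combination (∫ x in (0:ℝ)..1, (w x) ^ 2) * (hparts - hmoment)
end

section
/- Let ν ∈ (−1, 1/2) with ν ≠ 0, and let p : ℝ → ℝ be continuous on [0,1]. There is no function w : ℝ → ℝ, four times continuously differentiable on [0,1], with ∫₀¹ w(x)² dx > 0, satisfying the clamped boundary conditions w(0) = w(1) = 0 and w'(0) = w'(1) = 0, that solves simultaneously the PGD limit strip equation with Poisson ratio ν and load p and the Kirchhoff–Love strip equation with Poisson ratio ν and load p. -/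
/-- The PGD limit strip equation with Poisson ratio `ν` and load `p`. -/
def PGDeq (ν : ℝ) (w p : ℝ → ℝ) : Prop :=
  ∀ x ∈ Set.Icc (0 : ℝ) 1,
    ((1 - ν) / (12 * (1 + ν) * (1 - 2 * ν))) * D 4 w x
      - (ν ^ 2 / (12 * (1 - ν ^ 2) * (1 - 2 * ν)))
          * (2 * kappa w * D 2 w x - (kappa w) ^ 2 * w x) = p x

/-- The Kirchhoff–Love strip equation with Poisson ratio `ν` and load `p`. -/
def KLeq (ν : ℝ) (w p : ℝ → ℝ) : Prop :=
  ∀ x ∈ Set.Icc (0 : ℝ) 1, (1 / (12 * (1 - ν ^ 2))) * D 4 w x = p x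

/-!
Subtracting the Kirchhoff–Love equation from the PGD equation leaves
`ν² / (12 (1 - ν²) (1 - 2ν)) · (w⁗ - 2κw'' + κ²w) = 0`, so `w⁗ = 2κw'' - κ²w` when `ν ≠ 0`.
Two integrations by parts, whose boundary terms vanish for a clamped strip, give
`∫ w''² = ∫ w w⁗`; hence `∫ (w'' - κw)² = ∫ w''² - ∫ w w⁗ = 0` and `w'' = κw` on `[0,1]`.
Since `w(0) = w'(0) = 0`, uniqueness for this linear ODE forces `w = 0`, contradicting `∫ w² > 0`.
-/
open Set intervalIntegral

section Derivatives

variable {w : ℝ → ℝ} {n m : ℕ}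

lemma D_zero (w : ℝ → ℝ) : D 0 w = w := iteratedDerivWithin_zero

lemma continuousOn_D (hw : ContDiffOn ℝ n w (Icc 0 1)) (hm : m ≤ n) :
    ContinuousOn (D m w) (Icc 0 1) :=
  hw.continuousOn_iteratedDerivWithin (by exact_mod_cast hm) (uniqueDiffOn_Icc one_pos)

lemma hasDerivWithinAt_D (hw : ContDiffOn ℝ n w (Icc 0 1)) (hm : m < n) {x : ℝ}
    (hx : x ∈ Icc (0 : ℝ) 1) : HasDerivWithinAt (D m w) (D (m + 1) w x) (Icc 0 1) x := by
  rw [D, D, iteratedDerivWithin_succ]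
  exact ((hw.differentiableOn_iteratedDerivWithin (by exact_mod_cast hm)
    (uniqueDiffOn_Icc one_pos)) x hx).hasDerivWithinAt

lemma integral_D_mul_D_succ (hw : ContDiffOn ℝ n w (Icc 0 1)) {i j : ℕ} (hi : i < n)
    (hj : j < n) :
    ∫ x in (0 : ℝ)..1, D i w x * D (j + 1) w x
      = D i w 1 * D j w 1 - D i w 0 * D j w 0 - ∫ x in (0 : ℝ)..1, D (i + 1) w x * D j w x := by
  have hI : uIcc (0 : ℝ) 1 = Icc 0 1 := uIcc_of_le zero_le_one
  refine integral_mul_deriv_eq_deriv_mul_of_hasDerivWithinAt ?_ ?_ ?_ ?_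
  · rw [hI]; exact fun x hx => hasDerivWithinAt_D hw hi hx
  · rw [hI]; exact fun x hx => hasDerivWithinAt_D hw hj hx
  · exact (continuousOn_D hw hi).intervalIntegrable_of_Icc zero_le_one
  · exact (continuousOn_D hw hj).intervalIntegrable_of_Icc zero_le_one

lemma integral_D_two_sq (hw : ContDiffOn ℝ 4 w (Icc 0 1)) (h0 : w 0 = 0) (h1 : w 1 = 0)
    (h0' : D 1 w 0 = 0) (h1' : D 1 w 1 = 0) :
    ∫ x in (0 : ℝ)..1, D 2 w x ^ 2 = ∫ x in (0 : ℝ)..1, w x * D 4 w x := by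
  have e₁ := integral_D_mul_D_succ hw (i := 0) (j := 3) (by norm_num) (by norm_num)
  have e₂ := integral_D_mul_D_succ hw (i := 1) (j := 2) (by norm_num) (by norm_num)
  simp only [D_zero, Nat.reduceAdd] at e₁ e₂
  simp only [sq]
  rw [e₁, e₂, h0, h1, h0', h1']
  ring

end Derivatives

lemma eqOn_zero_of_integral_sq_eq_zero {f : ℝ → ℝ} {a b : ℝ} (hab : a < b)
    (hf : ContinuousOn f (Icc a b)) (h : ∫ x in a..b, f x ^ 2 = 0) : EqOn f 0 (Icc a b) := by
  intro x hx
  by_contra hne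
  have hpos := integral_pos hab (hf.pow 2) (fun y _ => sq_nonneg (f y))
    ⟨x, hx, sq_pos_of_ne_zero hne⟩
  exact hpos.ne' h

lemma D_four_eq_of_PGDeq_of_KLeq {ν : ℝ} {w p : ℝ → ℝ} (hν₁ : 1 + ν ≠ 0) (hν₂ : 1 - ν ≠ 0)
    (hν₃ : 1 - 2 * ν ≠ 0) (hν₀ : ν ≠ 0) (hPGD : PGDeq ν w p) (hKL : KLeq ν w p) :
    ∀ x ∈ Icc (0 : ℝ) 1, D 4 w x = 2 * kappa w * D 2 w x - kappa w ^ 2 * w x := by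
  intro x hx
  have e := hPGD x hx
  rw [← hKL x hx] at e
  have hsq : 1 - ν ^ 2 ≠ 0 := by
    rw [show 1 - ν ^ 2 = (1 + ν) * (1 - ν) by ring]; exact mul_ne_zero hν₁ hν₂
  have hcoef : (1 - ν) / (12 * (1 + ν) * (1 - 2 * ν)) - 1 / (12 * (1 - ν ^ 2))
      = ν ^ 2 / (12 * (1 - ν ^ 2) * (1 - 2 * ν)) := by
    rw [div_sub_div _ _ (by positivity) (by positivity), div_eq_div_iff (by positivity)
      (by positivity)]
    ring
  have hc : ν ^ 2 / (12 * (1 - ν ^ 2) * (1 - 2 * ν)) ≠ 0 := by positivity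
  apply mul_left_cancel₀ hc
  linear_combination e - D 4 w x * hcoef

lemma D_two_eq_mul_of_D_four_eq {w : ℝ → ℝ} {k : ℝ} (hw : ContDiffOn ℝ 4 w (Icc 0 1))
    (h0 : w 0 = 0) (h1 : w 1 = 0) (h0' : D 1 w 0 = 0) (h1' : D 1 w 1 = 0)
    (h4 : ∀ x ∈ Icc (0 : ℝ) 1, D 4 w x = 2 * k * D 2 w x - k ^ 2 * w x) :
    ∀ x ∈ Icc (0 : ℝ) 1, D 2 w x = k * w x := by
  have hw₀ : ContinuousOn w (Icc 0 1) := hw.continuousOn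
  have hw₂ := continuousOn_D hw (m := 2) (by norm_num)
  have hw₄ := continuousOn_D hw (m := 4) (by norm_num)
  have hsq : ∫ x in (0 : ℝ)..1, (D 2 w x - k * w x) ^ 2 = 0 :=
    calc ∫ x in (0 : ℝ)..1, (D 2 w x - k * w x) ^ 2
        = ∫ x in (0 : ℝ)..1, (D 2 w x ^ 2 - w x * D 4 w x) := by
          refine integral_congr fun x hx => ?_
          rw [uIcc_of_le zero_le_one] at hx
          simp only [h4 x hx]
          ring
      _ = (∫ x in (0 : ℝ)..1, D 2 w x ^ 2) - ∫ x in (0 : ℝ)..1, w x * D 4 w x :=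
          integral_sub ((hw₂.pow 2).intervalIntegrable_of_Icc zero_le_one)
            ((hw₀.mul hw₄).intervalIntegrable_of_Icc zero_le_one)
      _ = 0 := by rw [integral_D_two_sq hw h0 h1 h0' h1', sub_self]
  intro x hx
  exact sub_eq_zero.mp (eqOn_zero_of_integral_sq_eq_zero zero_lt_one
    (hw₂.sub (continuousOn_const.mul hw₀)) hsq hx)

lemma eqOn_zero_of_D_two_eq_mul {w : ℝ → ℝ} {k : ℝ} (hw : ContDiffOn ℝ 2 w (Icc 0 1))
    (h0 : w 0 = 0) (h0' : D 1 w 0 = 0) (h2 : ∀ x ∈ Icc (0 : ℝ) 1, D 2 w x = k * w x) :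
    EqOn w 0 (Icc 0 1) := by
  -- `L (y, y') = (y', k y)`: `w'' = k w` as a first-order system for `(w, w')`.
  let L : ℝ × ℝ →L[ℝ] ℝ × ℝ :=
    (ContinuousLinearMap.snd ℝ ℝ ℝ).prod (k • ContinuousLinearMap.fst ℝ ℝ ℝ)
  have h : EqOn (fun t => (D 0 w t, D 1 w t)) 0 (Icc 0 1) := by
    refine ODE_solution_unique (v := fun _ => L) (fun _ => L.lipschitz)
      ((continuousOn_D hw (by norm_num)).prodMk (continuousOn_D hw (by norm_num))) ?_
      continuousOn_const ?_ (by simp [D_zero, h0, h0'])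
    · intro t ht
      have hx := Ico_subset_Icc_self ht
      have hd := ((hasDerivWithinAt_D hw (m := 0) (by norm_num) hx).prodMk
        (hasDerivWithinAt_D hw (m := 1) (by norm_num) hx)).mono_of_mem_nhdsWithin
        (Icc_mem_nhdsGE_of_mem ht)
      simpa [L, D_zero, h2 t hx] using hd
    · intro t _
      simpa [Pi.zero_def] using hasDerivWithinAt_const t (Ici t) (0 : ℝ × ℝ)
  intro t ht
  simpa [D_zero] using congrArg Prod.fst (h ht)

theorem no_clamped_solution_of_both_equations_general
    (ν : ℝ) (hν : ν ∈ Set.Ioo (-1 : ℝ) (1/2)) (hν0 : ν ≠ 0)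
    (p : ℝ → ℝ) :
    ¬ ∃ w : ℝ → ℝ, ContDiffOn ℝ 4 w (Set.Icc (0 : ℝ) 1) ∧
        (0 < ∫ x in (0:ℝ)..1, (w x) ^ 2) ∧
        w 0 = 0 ∧ w 1 = 0 ∧ D 1 w 0 = 0 ∧ D 1 w 1 = 0 ∧
        PGDeq ν w p ∧ KLeq ν w p := by
  rintro ⟨w, hw, hpos, h0, h1, h0', h1', hPGD, hKL⟩
  have h4 := D_four_eq_of_PGDeq_of_KLeq (by linarith [hν.1] : 0 < 1 + ν).ne'
    (by linarith [hν.2] : 0 < 1 - ν).ne' (by linarith [hν.2] : 0 < 1 - 2 * ν).ne' hν0 hPGD hKL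
  have hw0 := eqOn_zero_of_D_two_eq_mul (hw.of_le (by norm_num)) h0 h0'
    (D_two_eq_mul_of_D_four_eq hw h0 h1 h0' h1' h4)
  have hI : ∫ x in (0 : ℝ)..1, w x ^ 2 = 0 := by
    rw [integral_congr (g := fun _ => 0) fun x hx => ?_, intervalIntegral.integral_zero]
    rw [uIcc_of_le zero_le_one] at hx
    simp [hw0 hx]
  exact hpos.ne' hI

/-- For `ν ≠ 0`, no clamped strip deflection can solve simultaneously the PGD limit
equation and the Kirchhoff–Love equation. -/
theorem no_clamped_solution_of_both_equations
    (ν : ℝ) (hν : ν ∈ Set.Ioo (-1 : ℝ) (1/2)) (hν0 : ν ≠ 0)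
    (p : ℝ → ℝ) (hp : ContinuousOn p (Set.Icc (0 : ℝ) 1)) :
    ¬ ∃ w : ℝ → ℝ, ContDiffOn ℝ 4 w (Set.Icc (0 : ℝ) 1) ∧
        (0 < ∫ x in (0:ℝ)..1, (w x) ^ 2) ∧
        w 0 = 0 ∧ w 1 = 0 ∧ D 1 w 0 = 0 ∧ D 1 w 1 = 0 ∧
        PGDeq ν w p ∧ KLeq ν w p :=
  no_clamped_solution_of_both_equations_general ν hν hν0 p
end

section
/- Let ν ∈ (−1, 1/2), let n be a positive integer, and let p_n be a nonzero real number. Define w(x) = (12·(1−ν²)·p_n/(n·π)⁴)·sin(n·π·x) and p(x) = p_n·sin(n·π·x). Then w satisfies the simply supported boundary conditions w(0) = w(1) = 0, w''(0) = w''(1) = 0, and w solves simultaneously the Kirchhoff–Love strip equation with Poisson ratio ν and load p and the PGD limit strip equation with Poisson ratio ν and load p. -/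
/-!
The deflection `w = c sin(kx)`, `k = nπ`, vanishes at both ends and satisfies `w'' = -k² w`, so
`κ(w) = -k²` and `w⁗ = κ(w)² w`. On any such function `2κ w'' - κ² w = κ² w`, and the PGD operator
collapses to `(1-ν)/(12(1+ν)(1-2ν)) - ν²/(12(1-ν²)(1-2ν)) = 1/(12(1-ν²))` times `κ² w`, which is
the Kirchhoff–Love operator applied to `w`.
-/

open Real

lemma D_eq_iteratedDeriv {f : ℝ → ℝ} {m : ℕ} {x : ℝ} (hf : ContDiffAt ℝ m f x)
    (hx : x ∈ Set.Icc (0 : ℝ) 1) : D m f x = iteratedDeriv m f x :=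
  iteratedDerivWithin_eq_iteratedDeriv (uniqueDiffOn_Icc one_pos) hf hx

lemma iteratedDeriv_two_mul_const_mul_sin (j : ℕ) (c k x : ℝ) :
    iteratedDeriv (2 * j) (fun y => c * sin (k * y)) x = (-k ^ 2) ^ j * (c * sin (k * x)) := by
  rw [iteratedDeriv_const_mul_field, iteratedDeriv_comp_const_mul contDiff_sin,
    iteratedDeriv_even_sin]
  simp only [Pi.mul_apply, Pi.pow_apply, Pi.neg_apply, Pi.one_apply]
  rw [pow_mul, neg_pow, neg_pow (k ^ 2)]
  ring

lemma D_two_mul_const_mul_sin (j : ℕ) (c k : ℝ) {x : ℝ} (hx : x ∈ Set.Icc (0 : ℝ) 1) :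
    D (2 * j) (fun y => c * sin (k * y)) x = (-k ^ 2) ^ j * (c * sin (k * x)) := by
  rw [D_eq_iteratedDeriv (by fun_prop) hx, iteratedDeriv_two_mul_const_mul_sin]

lemma integral_sin_mul_sq {k : ℝ} (hk : k ≠ 0) (hsin : sin k = 0) :
    ∫ x in (0 : ℝ)..1, sin (k * x) ^ 2 = 1 / 2 := by
  rw [intervalIntegral.integral_comp_mul_left (fun x => sin x ^ 2) hk, integral_sin_sq]
  simp only [mul_zero, mul_one, sin_zero, cos_zero, hsin, zero_mul, sub_self, zero_add, sub_zero,
    smul_eq_mul]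
  field_simp

lemma kappa_eq_of_D_two_eq_mul {w : ℝ → ℝ} {μ : ℝ}
    (hD2 : ∀ x ∈ Set.Icc (0 : ℝ) 1, D 2 w x = μ * w x)
    (hw : ∫ x in (0 : ℝ)..1, w x ^ 2 ≠ 0) : kappa w = μ := by
  have hnum : ∫ x in (0 : ℝ)..1, w x * D 2 w x = ∫ x in (0 : ℝ)..1, μ * w x ^ 2 := by
    refine intervalIntegral.integral_congr fun x hx => ?_
    rw [Set.uIcc_of_le zero_le_one] at hx
    simp only [hD2 x hx]
    ring
  rw [kappa, hnum, intervalIntegral.integral_const_mul, mul_div_cancel_right₀ _ hw]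

lemma pgd_coeff_sub_eq_kl_coeff {ν : ℝ} (h1 : 1 + ν ≠ 0) (h2 : 1 - ν ≠ 0) (h3 : 1 - 2 * ν ≠ 0) :
    (1 - ν) / (12 * (1 + ν) * (1 - 2 * ν)) - ν ^ 2 / (12 * (1 - ν ^ 2) * (1 - 2 * ν))
      = 1 / (12 * (1 - ν ^ 2)) := by
  rw [show 1 - ν ^ 2 = (1 + ν) * (1 - ν) by ring, div_sub_div _ _ (by positivity) (by positivity),
    div_eq_div_iff (by positivity) (by positivity)]
  ring

lemma PGDeq_of_KLeq {ν : ℝ} {w p : ℝ → ℝ} (h1 : 1 + ν ≠ 0) (h2 : 1 - ν ≠ 0) (h3 : 1 - 2 * ν ≠ 0)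
    (hD2 : ∀ x ∈ Set.Icc (0 : ℝ) 1, D 2 w x = kappa w * w x)
    (hD4 : ∀ x ∈ Set.Icc (0 : ℝ) 1, D 4 w x = kappa w ^ 2 * w x)
    (hKL : KLeq ν w p) : PGDeq ν w p := by
  intro x hx
  rw [← hKL x hx, hD2 x hx, hD4 x hx, ← pgd_coeff_sub_eq_kl_coeff h1 h2 h3]
  ring

/-- For a sinusoidal load `p(x) = pₙ sin(nπx)`, the simply supported Kirchhoff–Love
deflection `w(x) = 12(1−ν²)pₙ/(nπ)⁴ · sin(nπx)` solves both the Kirchhoff–Love strip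
equation and the PGD limit strip equation. -/
theorem sinusoidal_deflection_solves_both_equations
    (ν : ℝ) (hν : ν ∈ Set.Ioo (-1 : ℝ) (1/2))
    (n : ℕ) (hn : 0 < n) (pn : ℝ) (hpn : pn ≠ 0)
    (w p : ℝ → ℝ)
    (hw : ∀ x, w x = (12 * (1 - ν ^ 2) * pn / ((n : ℝ) * π) ^ 4)
            * Real.sin ((n : ℝ) * π * x))
    (hp : ∀ x, p x = pn * Real.sin ((n : ℝ) * π * x)) :
    w 0 = 0 ∧ w 1 = 0 ∧ D 2 w 0 = 0 ∧ D 2 w 1 = 0 ∧ KLeq ν w p ∧ PGDeq ν w p := by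
  obtain ⟨hν₁, hν₂⟩ := hν
  set k : ℝ := n * π
  set c : ℝ := 12 * (1 - ν ^ 2) * pn / k ^ 4 with hc_def
  have hk : k ≠ 0 := mul_ne_zero (Nat.cast_ne_zero.mpr hn.ne') pi_ne_zero
  have hsin : sin k = 0 := sin_nat_mul_pi n
  have h1 : 1 + ν ≠ 0 := by linarith
  have h2 : 1 - ν ≠ 0 := by linarith
  have hν2 : 1 - ν ^ 2 ≠ 0 := by nlinarith
  have hc : c ≠ 0 := by positivity
  have hw' : w = fun x => c * sin (k * x) := funext hw
  have hD2 (x) (hx : x ∈ Set.Icc (0 : ℝ) 1) : D 2 w x = -k ^ 2 * w x := by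
    simpa [hw'] using D_two_mul_const_mul_sin 1 c k hx
  have hD4 (x) (hx : x ∈ Set.Icc (0 : ℝ) 1) : D 4 w x = k ^ 4 * w x := by
    simpa [hw', ← pow_mul] using D_two_mul_const_mul_sin 2 c k hx
  have hκ : kappa w = -k ^ 2 := by
    refine kappa_eq_of_D_two_eq_mul hD2 ?_
    simp only [hw', mul_pow, intervalIntegral.integral_const_mul, integral_sin_mul_sq hk hsin]
    positivity
  have hKL : KLeq ν w p := fun x hx => by
    rw [hD4 x hx, hw, hp, hc_def]
    field_simp
  refine ⟨by simp [hw], by simp [hw, hsin], ?_, ?_, hKL, PGDeq_of_KLeq h1 h2 (by linarith) ?_ ?_ hKL⟩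
  · simp [hD2 0 (by simp), hw]
  · simp [hD2 1 (by simp), hw, hsin]
  · simpa [hκ] using hD2
  · simpa [hκ, ← pow_mul] using hD4
end

section
/- Let ω ⊂ ℝ² be a bounded open set, ν ∈ (−1, 1/2), λ ∈ ℝ, and let u : ℝ² → ℝ be four times continuously differentiable on a neighborhood of the closure of ω, with Δu(x) = λ·u(x) for all x ∈ ω and 0 < ∫_ω u(x)² dx < ∞. Set κ(u) = (∫_ω u(x)·Δu(x) dx)/(∫_ω u(x)² dx). Then κ(u) = λ, and for every x ∈ ω: (i) Δ²u(x) − 2·κ(u)·Δu(x) + κ(u)²·u(x) = 0, and (ii) ((1−ν)/(12(1+ν)(1−2ν)))·Δ²u(x) − (ν²/(12(1−ν²)(1−2ν)))·(2·κ(u)·Δu(x) − κ(u)²·u(x)) = (1/(12(1−ν²)))·Δ²u(x); that is, the left-hand side of the PGD limit plate equation applied to u coincides with the left-hand side of the Kirchhoff–Love plate equation applied to u. -/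
/-- The Laplacian of `u : ℝ² → ℝ`, `Δu = ∂²u/∂x₁² + ∂²u/∂x₂²`. -/
noncomputable def lap (u : ℝ × ℝ → ℝ) : ℝ × ℝ → ℝ := fun x =>
  deriv (deriv fun t => u (t, x.2)) x.1 + deriv (deriv fun t => u (x.1, t)) x.2

/-!
Since `Δu = λu` on the open set `ω`, the functions `Δu` and `λu` agree near every point of `ω`,
so the locality of the Laplacian gives `Δ²u = λΔu = λ²u` there, and integrating `u Δu = λu²` gives
`κ(u) = λ`. Then `Δ²u − 2κΔu + κ²u = (λ² − 2λ² + λ²)u = 0`, and the PGD operator reduces to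
`(a − b)λ²u`, where the difference `a − b` of its two coefficients is the Kirchhoff–Love
coefficient `1/(12(1 − ν²))`.
-/

open Filter Topology MeasureTheory

theorem Filter.EventuallyEq.lap_eq {f g : ℝ × ℝ → ℝ} {x : ℝ × ℝ} (h : f =ᶠ[𝓝 x] g) :
    lap f x = lap g x := by
  have h₁ : (fun t => f (t, x.2)) =ᶠ[𝓝 x.1] fun t => g (t, x.2) :=
    (Continuous.prodMk_left x.2).continuousAt.tendsto.eventually h
  have h₂ : (fun t => f (x.1, t)) =ᶠ[𝓝 x.2] fun t => g (x.1, t) :=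
    (Continuous.prodMk_right x.1).continuousAt.tendsto.eventually h
  simp only [lap, h₁.deriv.deriv_eq, h₂.deriv.deriv_eq]

theorem lap_const_mul (c : ℝ) (f : ℝ × ℝ → ℝ) (x : ℝ × ℝ) :
    lap (fun y => c * f y) x = c * lap f x := by
  simp only [lap, deriv_const_mul_field', mul_add]

theorem lap_lap_eq_of_lap_eq_mul {ω : Set (ℝ × ℝ)} (hω : IsOpen ω) {u : ℝ × ℝ → ℝ} {l : ℝ}
    (hhelm : ∀ x ∈ ω, lap u x = l * u x) {x : ℝ × ℝ} (hx : x ∈ ω) :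
    lap (lap u) x = l ^ 2 * u x := by
  have hloc : lap u =ᶠ[𝓝 x] fun y => l * u y :=
    eventually_of_mem (hω.mem_nhds hx) hhelm
  rw [hloc.lap_eq, lap_const_mul, hhelm x hx]
  ring

theorem setIntegral_mul_lap_div_eq_of_lap_eq_mul {ω : Set (ℝ × ℝ)} (hω : MeasurableSet ω)
    {u : ℝ × ℝ → ℝ} {l : ℝ} (hhelm : ∀ x ∈ ω, lap u x = l * u x)
    (hpos : (∫ x in ω, u x ^ 2) ≠ 0) :
    (∫ x in ω, u x * lap u x) / (∫ x in ω, u x ^ 2) = l := by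
  have hint : (∫ x in ω, u x * lap u x) = l * ∫ x in ω, u x ^ 2 := by
    rw [← integral_const_mul]
    exact setIntegral_congr_fun hω fun x hx => by rw [hhelm x hx]; ring
  rw [hint, mul_div_assoc, div_self hpos, mul_one]

theorem pgd_coeff_sub_eq_kirchhoffLove_coeff {ν : ℝ} (h₁ : 1 + ν ≠ 0) (h₂ : 1 - ν ≠ 0)
    (h₃ : 1 - 2 * ν ≠ 0) :
    (1 - ν) / (12 * (1 + ν) * (1 - 2 * ν)) - ν ^ 2 / (12 * (1 - ν ^ 2) * (1 - 2 * ν))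
      = 1 / (12 * (1 - ν ^ 2)) := by
  have hsq : 12 * (1 - ν ^ 2) ≠ 0 := by
    rw [show 12 * (1 - ν ^ 2) = 12 * ((1 + ν) * (1 - ν)) by ring]
    exact mul_ne_zero (by norm_num) (mul_ne_zero h₁ h₂)
  have hpgd₁ : 12 * (1 + ν) * (1 - 2 * ν) ≠ 0 := mul_ne_zero (mul_ne_zero (by norm_num) h₁) h₃
  have hpgd₂ : 12 * (1 - ν ^ 2) * (1 - 2 * ν) ≠ 0 := mul_ne_zero hsq h₃
  rw [div_sub_div _ _ hpgd₁ hpgd₂, div_eq_div_iff (mul_ne_zero hpgd₁ hpgd₂) hsq]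
  ring

theorem helmholtz_solution_makes_PGD_and_KL_coincide_general
    (ω : Set (ℝ × ℝ)) (hω : IsOpen ω)
    (ν : ℝ) (hν : ν ∈ Set.Ioo (-1 : ℝ) (1/2)) (l : ℝ)
    (u : ℝ × ℝ → ℝ)
    (hhelm : ∀ x ∈ ω, lap u x = l * u x)
    (hpos : 0 < ∫ x in ω, (u x) ^ 2) :
    (∫ x in ω, u x * lap u x) / (∫ x in ω, (u x) ^ 2) = l ∧
      ∀ x ∈ ω,
        (lap (lap u) x
            - 2 * ((∫ y in ω, u y * lap u y) / (∫ y in ω, (u y) ^ 2)) * lap u x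
            + ((∫ y in ω, u y * lap u y) / (∫ y in ω, (u y) ^ 2)) ^ 2 * u x = 0)
        ∧ (((1 - ν) / (12 * (1 + ν) * (1 - 2 * ν))) * lap (lap u) x
            - (ν ^ 2 / (12 * (1 - ν ^ 2) * (1 - 2 * ν)))
                * (2 * ((∫ y in ω, u y * lap u y) / (∫ y in ω, (u y) ^ 2)) * lap u x
                    - ((∫ y in ω, u y * lap u y) / (∫ y in ω, (u y) ^ 2)) ^ 2 * u x)
          = (1 / (12 * (1 - ν ^ 2))) * lap (lap u) x) := by
  obtain ⟨hν₁, hν₂⟩ := hν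
  have hcoeff := pgd_coeff_sub_eq_kirchhoffLove_coeff (ν := ν) (by linarith) (by linarith)
    (by linarith)
  have hκ := setIntegral_mul_lap_div_eq_of_lap_eq_mul hω.measurableSet hhelm hpos.ne'
  refine ⟨hκ, fun x hx => ?_⟩
  rw [hκ, lap_lap_eq_of_lap_eq_mul hω hhelm hx, hhelm x hx]
  constructor
  · ring
  · linear_combination l ^ 2 * u x * hcoeff

/-- If `Δu = λ u` on a bounded open `ω ⊂ ℝ²` (with `u` four times continuously
differentiable on a neighborhood of the closure of `ω` and `0 < ∫_ω u² < ∞`),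
then the Rayleigh quotient `κ(u) = (∫_ω u Δu)/(∫_ω u²)` equals `λ`,
`u` satisfies `Δ²u − 2κ(u)Δu + κ(u)²u = 0` on `ω`, and the left-hand side of the PGD
limit plate equation coincides on `ω` with that of the Kirchhoff–Love plate equation. -/
theorem helmholtz_solution_makes_PGD_and_KL_coincide
    (ω : Set (ℝ × ℝ)) (hω : IsOpen ω) (hb : Bornology.IsBounded ω)
    (ν : ℝ) (hν : ν ∈ Set.Ioo (-1 : ℝ) (1/2)) (l : ℝ)
    (u : ℝ × ℝ → ℝ)
    (hu : ∃ U : Set (ℝ × ℝ), IsOpen U ∧ closure ω ⊆ U ∧ ContDiffOn ℝ 4 u U)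
    (hhelm : ∀ x ∈ ω, lap u x = l * u x)
    (hint : MeasureTheory.IntegrableOn (fun x => (u x) ^ 2) ω)
    (hpos : 0 < ∫ x in ω, (u x) ^ 2) :
    (∫ x in ω, u x * lap u x) / (∫ x in ω, (u x) ^ 2) = l ∧
      ∀ x ∈ ω,
        (lap (lap u) x
            - 2 * ((∫ y in ω, u y * lap u y) / (∫ y in ω, (u y) ^ 2)) * lap u x
            + ((∫ y in ω, u y * lap u y) / (∫ y in ω, (u y) ^ 2)) ^ 2 * u x = 0)
        ∧ (((1 - ν) / (12 * (1 + ν) * (1 - 2 * ν))) * lap (lap u) x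
            - (ν ^ 2 / (12 * (1 - ν ^ 2) * (1 - 2 * ν)))
                * (2 * ((∫ y in ω, u y * lap u y) / (∫ y in ω, (u y) ^ 2)) * lap u x
                    - ((∫ y in ω, u y * lap u y) / (∫ y in ω, (u y) ^ 2)) ^ 2 * u x)
          = (1 / (12 * (1 - ν ^ 2))) * lap (lap u) x) :=
  helmholtz_solution_makes_PGD_and_KL_coincide_general ω hω ν hν l u hhelm hpos
end

section
/- Let ν ∈ (−1, 1/2), let n be a positive integer, and let p_n be a nonzero real number. Let ω = (0,1) × (0,1) ⊂ ℝ², define u(x₁,x₂) = (3·p_n·(1−ν²)/(n⁴·π⁴))·sin(n·π·x₁)·sin(n·π·x₂) and p(x₁,x₂) = p_n·sin(n·π·x₁)·sin(n·π·x₂). Then Δu = −2·n²·π²·u on ω, ∫_ω u² > 0, and u solves simultaneously, at every point of ω, the Kirchhoff–Love plate equation (1/(12(1−ν²)))·Δ²u = p and the PGD limit plate equation ((1−ν)/(12(1+ν)(1−2ν)))·Δ²u − (ν²/(12(1−ν²)(1−2ν)))·(2·κ(u)·Δu − κ(u)²·u) = p, where κ(u) = (∫_ω u·Δu)/(∫_ω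 u²). -/
/-!
The deflection `u` is an eigenmode of the Laplacian on the square, `Δu = κ₀ u` with
`κ₀ = -2n²π²`, so its Rayleigh quotient `κ(u)` is `κ₀` and `Δ²u = κ₀² u`. On such a `u` the
PGD operator reduces to `((1-ν)² - ν²) / (12(1-ν²)(1-2ν)) · κ₀² u = κ₀² u / (12(1-ν²))`,
which is the Kirchhoff–Love operator, and the amplitude of `u` is chosen to make this `p`.
Positivity of `∫ u²` comes from Fubini and `∫₀¹ sin²(nπt) = 1/2`.
-/

open Real

open MeasureTheory Set

theorem deriv_deriv_const_mul_sin_mul (k a : ℝ) :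
    deriv (deriv fun s => k * sin (a * s)) = fun s => -a ^ 2 * (k * sin (a * s)) := by
  have hinner (s : ℝ) : HasDerivAt (fun s => a * s) a s := by
    simpa using (hasDerivAt_id s).const_mul a
  have hfirst : deriv (fun s => k * sin (a * s)) = fun s => k * (cos (a * s) * a) :=
    funext fun s => (((hasDerivAt_sin _).comp s (hinner s)).const_mul k).deriv
  funext s
  have hsecond : HasDerivAt (fun s => k * (cos (a * s) * a)) (k * (-sin (a * s) * a * a)) s :=
    (((hasDerivAt_cos _).comp s (hinner s)).mul_const a).const_mul k
  rw [hfirst, hsecond.deriv]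
  ring

noncomputable def sinMode (C a b : ℝ) : ℝ × ℝ → ℝ := fun x => C * sin (a * x.1) * sin (b * x.2)

theorem lap_sinMode_apply (C a b : ℝ) (x : ℝ × ℝ) :
    lap (sinMode C a b) x = -(a ^ 2 + b ^ 2) * sinMode C a b x := by
  have h₁ : (fun t => sinMode C a b (t, x.2)) = fun t => C * sin (b * x.2) * sin (a * t) := by
    funext t; simp only [sinMode]; ring
  have h₂ : (fun t => sinMode C a b (x.1, t)) = fun t => C * sin (a * x.1) * sin (b * t) := by
    funext t; simp only [sinMode]
  unfold lap
  rw [h₁, h₂, deriv_deriv_const_mul_sin_mul, deriv_deriv_const_mul_sin_mul]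
  simp only [sinMode]
  ring

theorem lap_sinMode (C a b : ℝ) : lap (sinMode C a b) = sinMode (-(a ^ 2 + b ^ 2) * C) a b := by
  funext x
  rw [lap_sinMode_apply]
  simp only [sinMode]
  ring

theorem lap_lap_sinMode_apply (C a b : ℝ) (x : ℝ × ℝ) :
    lap (lap (sinMode C a b)) x = (a ^ 2 + b ^ 2) ^ 2 * sinMode C a b x := by
  rw [lap_sinMode, lap_sinMode_apply]
  simp only [sinMode]
  ring

theorem setIntegral_sinMode_sq (C a b : ℝ) (s t : Set ℝ) :
    ∫ x in s ×ˢ t, sinMode C a b x ^ 2 =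
      C ^ 2 * (∫ x in s, sin (a * x) ^ 2) * ∫ y in t, sin (b * y) ^ 2 := by
  calc ∫ x in s ×ˢ t, sinMode C a b x ^ 2
      = ∫ z in s ×ˢ t, C ^ 2 * sin (a * z.1) ^ 2 * sin (b * z.2) ^ 2 ∂volume.prod volume := by
        rw [← Measure.volume_eq_prod]
        congr 1
        funext z
        simp only [sinMode]
        ring
    _ = _ := by
        rw [setIntegral_prod_mul (fun x => C ^ 2 * sin (a * x) ^ 2) (fun y => sin (b * y) ^ 2),
          integral_const_mul]

theorem setIntegral_Ioo_sin_nat_mul_pi_sq {n : ℕ} (hn : 0 < n) :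
    ∫ t in Ioo (0 : ℝ) 1, sin (n * π * t) ^ 2 = 1 / 2 := by
  have ha : (n : ℝ) * π ≠ 0 := by positivity
  rw [← integral_Ioc_eq_integral_Ioo, ← intervalIntegral.integral_of_le zero_le_one,
    intervalIntegral.integral_comp_mul_left (fun t => sin t ^ 2) ha, integral_sin_sq]
  simp only [mul_zero, mul_one, sin_zero, sin_nat_mul_pi, smul_eq_mul]
  field_simp
  ring

theorem integral_mul_div_integral_sq_of_eq_const_mul {α : Type*} [MeasurableSpace α] {μ : Measure α}
    {f g : α → ℝ} {c : ℝ} (hg : ∀ x, g x = c * f x) (hf : ∫ x, f x ^ 2 ∂μ ≠ 0) :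
    (∫ x, f x * g x ∂μ) / ∫ x, f x ^ 2 ∂μ = c := by
  have : (fun x => f x * g x) = fun x => c * f x ^ 2 := by
    funext x; rw [hg]; ring
  rw [this, integral_const_mul, mul_div_assoc, div_self hf, mul_one]

theorem pgd_eq_kirchhoffLove_of_eigen {ν κ w Δw ΔΔw : ℝ} (h₁ : 1 + ν ≠ 0) (h₂ : 1 - ν ≠ 0)
    (h₃ : 1 - 2 * ν ≠ 0) (hΔ : Δw = κ * w) (hΔΔ : ΔΔw = κ ^ 2 * w) :
    ((1 - ν) / (12 * (1 + ν) * (1 - 2 * ν))) * ΔΔw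
        - (ν ^ 2 / (12 * (1 - ν ^ 2) * (1 - 2 * ν))) * (2 * κ * Δw - κ ^ 2 * w)
      = (1 / (12 * (1 - ν ^ 2))) * ΔΔw := by
  have h : 1 - ν ^ 2 = (1 - ν) * (1 + ν) := by ring
  have h₃' : 1 - ν * 2 ≠ 0 := by rwa [mul_comm] at h₃
  subst hΔ hΔΔ
  rw [h]
  field_simp
  ring

/-- On the unit square, the sinusoidal deflection
`u(x₁,x₂) = 3pₙ(1−ν²)/(n⁴π⁴) · sin(nπx₁) sin(nπx₂)` satisfies the Helmholtz equation
`Δu = −2n²π²u`, has positive squared integral, and solves simultaneously the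
Kirchhoff–Love plate equation and the PGD limit plate equation with the
sinusoidal load `p(x₁,x₂) = pₙ sin(nπx₁) sin(nπx₂)`. -/
theorem sinusoidal_plate_solves_both_equations
    (ν : ℝ) (hν : ν ∈ Set.Ioo (-1 : ℝ) (1/2))
    (n : ℕ) (hn : 0 < n) (pn : ℝ) (hpn : pn ≠ 0)
    (ω : Set (ℝ × ℝ)) (hω : ω = Set.Ioo (0:ℝ) 1 ×ˢ Set.Ioo (0:ℝ) 1)
    (u p : ℝ × ℝ → ℝ)
    (hu : ∀ x : ℝ × ℝ, u x = (3 * pn * (1 - ν ^ 2) / ((n : ℝ) ^ 4 * π ^ 4))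
            * Real.sin ((n : ℝ) * π * x.1) * Real.sin ((n : ℝ) * π * x.2))
    (hp : ∀ x : ℝ × ℝ, p x = pn * Real.sin ((n : ℝ) * π * x.1) * Real.sin ((n : ℝ) * π * x.2)) :
    (∀ x ∈ ω, lap u x = -2 * (n : ℝ) ^ 2 * π ^ 2 * u x) ∧
    (0 < ∫ x in ω, (u x) ^ 2) ∧
    ∀ x ∈ ω,
      ((1 / (12 * (1 - ν ^ 2))) * lap (lap u) x = p x)
      ∧ (((1 - ν) / (12 * (1 + ν) * (1 - 2 * ν))) * lap (lap u) x
          - (ν ^ 2 / (12 * (1 - ν ^ 2) * (1 - 2 * ν)))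
              * (2 * ((∫ y in ω, u y * lap u y) / (∫ y in ω, (u y) ^ 2)) * lap u x
                  - ((∫ y in ω, u y * lap u y) / (∫ y in ω, (u y) ^ 2)) ^ 2 * u x)
        = p x) := by
  obtain ⟨hν₁, hν₂⟩ := hν
  have hν₀ : 1 - ν ^ 2 ≠ 0 := by nlinarith
  set a := (n : ℝ) * π
  set C := 3 * pn * (1 - ν ^ 2) / ((n : ℝ) ^ 4 * π ^ 4)
  obtain rfl : u = sinMode C a a := funext hu
  obtain rfl : p = sinMode pn a a := funext hp
  subst hω
  have hC : C ≠ 0 := by positivity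
  have hpos : 0 < ∫ x in Ioo 0 1 ×ˢ Ioo 0 1, sinMode C a a x ^ 2 := by
    rw [setIntegral_sinMode_sq, setIntegral_Ioo_sin_nat_mul_pi_sq hn]
    positivity
  have hκ := integral_mul_div_integral_sq_of_eq_const_mul (lap_sinMode_apply C a a) hpos.ne'
  have hKL (x : ℝ × ℝ) : 1 / (12 * (1 - ν ^ 2)) * lap (lap (sinMode C a a)) x = sinMode pn a a x := by
    rw [lap_lap_sinMode_apply]
    simp only [sinMode, C, a]
    field_simp
    ring
  refine ⟨fun x _ => by rw [lap_sinMode_apply]; ring, hpos, fun x _ => ⟨hKL x, ?_⟩⟩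
  rw [hκ, pgd_eq_kirchhoffLove_of_eigen (by linarith) (by linarith) (by linarith)
    (lap_sinMode_apply C a a x) (by rw [lap_lap_sinMode_apply]; ring), hKL]
end
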